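/- Let μ be a singular cardinal with cofinality κ. Then 𝔰_μ ≤ 𝔡_μ. -/

import Mathlib

/-!
Split `μ` into `κ` blocks `I_i` whose sizes `ν_i` are regular, increasing, larger than `κ` and
cofinal in `μ`. For `g : μ → κ` the pigeonhole principle gives `ĝ i` such that `g = ĝ i` on `ν_i`
points of `I_i`. Choose `R ⊆ κ` such that both `R` and its complement contain intervals
`[x, ĝ x)` beyond every point, and let `A_g` be the union of the blocks indexed by `R`.
Given `B ∈ [μ]^μ`, pick `w i ≥ i` with `|B ∩ I_(w i)| ≥ ν_i` and let `f = w i` on `I_i`. If `g`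
dominates `f`, then `w i < ĝ i` for all large `i`, so `B` meets both `A_g` and its complement in
blocks of cofinally large size. Hence the sets `A_g`, for `g` in a dominating family, form a
splitting family.
-/

universe u

open Cardinal

/-- `S` is a splitting family on `μ`: every member of `S` has cardinality `μ`,
and every `B ⊆ μ` of cardinality `μ` is split by some `A ∈ S`, that is,
`|B ∩ A| = |B \ A| = μ`. -/
def IsSplittingFamily (μ : Cardinal.{u}) (S : Set (Set μ.ord.ToType)) : Prop :=
  (∀ A ∈ S, #A = μ) ∧
  ∀ B : Set μ.ord.ToType, #B = μ → ∃ A ∈ S, #(B ∩ A : Set μ.ord.ToType) = μ ∧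
    #(B \ A : Set μ.ord.ToType) = μ

/-- `𝔰_μ`: the least cardinality of a splitting family on `μ`. -/
noncomputable def splitNumber (μ : Cardinal.{u}) : Cardinal.{u} :=
  sInf {c | ∃ S : Set (Set μ.ord.ToType), IsSplittingFamily μ S ∧ #S = c}

/-- `D` is a dominating family of functions `μ → κ`: every `f : μ → κ` is
dominated by some `g ∈ D`, i.e. `{α < μ : g(α) ≤ f(α)}` has cardinality `< μ`. -/
def IsDominatingFamily (μ κ : Cardinal.{u})
    (D : Set (μ.ord.ToType → κ.ord.ToType)) : Prop :=
  ∀ f : μ.ord.ToType → κ.ord.ToType, ∃ g ∈ D, #{α | g α ≤ f α} < μ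

/-- `𝔡_μ`: the least cardinality of a dominating family of functions `μ → κ`. -/
noncomputable def domNumber (μ κ : Cardinal.{u}) : Cardinal.{u} :=
  sInf {c | ∃ D : Set (μ.ord.ToType → κ.ord.ToType), IsDominatingFamily μ κ D ∧ #D = c}

open Set Order

section Windows

variable {K : Type u} [LinearOrder K]

theorem exists_forall_lt_of_mk_lt_cof {s : Set K} (hs : #s < Order.cof K) :
    ∃ x, ∀ y ∈ s, y < x := by
  by_contra! h
  exact (Order.cof_le h).not_gt hs

variable [WellFoundedLT K]

theorem exists_apply_lt_of_lt (hK : ∀ ξ : K, #(Iio ξ) < Order.cof K) (G : K → K) :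
    ∃ b : K → K, ∀ ⦃η ξ⦄, η < ξ → G (b η) < b ξ := by
  have (ξ : K) (r : Iio ξ → K) : ∃ x, ∀ η, G (r η) < x := by
    obtain ⟨x, hx⟩ := exists_forall_lt_of_mk_lt_cof (mk_range_le.trans_lt (hK ξ) :
      #(range (G ∘ r)) < _)
    exact ⟨x, fun η => hx _ (mem_range_self η)⟩
  choose ub hub using this
  let b : K → K := WellFoundedLT.fix fun ξ r => ub ξ fun η => r η η.2
  refine ⟨b, fun η ξ h => ?_⟩
  rw [show b ξ = ub ξ fun ζ => b ζ from WellFoundedLT.fix_eq _ ξ]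
  exact hub ξ (fun ζ => b ζ) ⟨η, h⟩

theorem exists_alternating_windows (hK : ∀ ξ : K, #(Iio ξ) < Order.cof K) (h : K → K) :
    ∃ R : Set K, ∀ i₀, (∃ x ≥ i₀, Ico x (h x) ⊆ R) ∧ ∃ y ≥ i₀, Ico y (h y) ⊆ Rᶜ := by
  set H : K → K := fun x => max x (h x)
  have hH (x : K) : x ≤ H x := le_max_left _ _
  have hIco (x : K) : Ico x (h x) ⊆ Ico x (H x) := Ico_subset_Ico_right (le_max_right _ _)
  obtain ⟨b, hb⟩ := exists_apply_lt_of_lt hK (H ∘ H)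
  have hb_mono : StrictMono b := fun η ξ hηξ => ((hH _).trans (hH _)).trans_lt (hb hηξ)
  -- `R` takes the first half of each double window `[b ξ, H (H (b ξ)))`; these are disjoint.
  refine ⟨⋃ ξ, Ico (b ξ) (H (b ξ)), fun i₀ => ⟨⟨b i₀, hb_mono.le_apply, ?_⟩,
    ⟨H (b i₀), hb_mono.le_apply.trans (hH _), ?_⟩⟩⟩
  · exact (hIco _).trans (subset_iUnion_of_subset i₀ subset_rfl)
  · refine (hIco _).trans fun z ⟨hz₁, hz₂⟩ hz => ?_
    obtain ⟨η, hη₁, hη₂⟩ := mem_iUnion.1 hz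
    rcases lt_trichotomy η i₀ with hη | rfl | hη
    · exact (hη₂.trans_le ((hH _).trans (hb hη).le)).not_ge ((hH _).trans hz₁)
    · exact hη₂.not_ge hz₁
    · exact (hz₂.trans (hb hη)).not_ge hη₁

end Windows

structure IsBlockPartition {M K : Type u} [LinearOrder K] (idx : M → K) (ν : K → Cardinal.{u}) :
    Prop where
  mk_fiber : ∀ i, #(idx ⁻¹' {i}) = ν i
  isRegular : ∀ i, (ν i).IsRegular
  mk_lt : ∀ i, #K < ν i
  lt_mk : ∀ i, ν i < #M
  monotone : Monotone ν
  exists_lt : ∀ c < #M, ∃ i, c < ν i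

namespace IsBlockPartition

variable {M K : Type u} [LinearOrder K] {idx : M → K} {ν : K → Cardinal.{u}}

theorem exists_le_mk_fiber_inter (hb : IsBlockPartition idx ν) (g : M → K) (i : K) :
    ∃ v, ν i ≤ #{α | idx α = i ∧ g α = v} := by
  obtain ⟨v, t, hts, ht, htv⟩ := infinite_pigeonhole_set (fun α : idx ⁻¹' {i} => g α) (ν i)
    (hb.mk_fiber i).ge (hb.isRegular i).aleph0_le
    (by rw [(hb.isRegular i).cof_ord]; exact hb.mk_lt i)
  exact ⟨v, ht.trans (mk_le_mk_of_subset fun α hα => ⟨hts hα, htv hα⟩)⟩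

theorem exists_ge_le_mk_inter_fiber (hb : IsBlockPartition idx ν) {B : Set M} (hB : #B = #M)
    {c : Cardinal} (hc : c < #M) (i : K) : ∃ j, i ≤ j ∧ c ≤ #(B ∩ idx ⁻¹' {j} : Set M) := by
  by_contra! hcon
  have hbound (j : K) : #(B ∩ idx ⁻¹' {j} : Set M) ≤ max (ν i) c := by
    rcases lt_or_ge j i with hj | hj
    · refine le_max_of_le_left ?_
      calc #(B ∩ idx ⁻¹' {j} : Set M) ≤ #(idx ⁻¹' {j}) := mk_le_mk_of_subset inter_subset_right
        _ = ν j := hb.mk_fiber j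
        _ ≤ ν i := hb.monotone hj.le
    · exact le_max_of_le_right (hcon j hj).le
  refine (mul_lt_of_lt ((hb.isRegular i).aleph0_le.trans (hb.lt_mk i).le)
    ((hb.mk_lt i).trans (hb.lt_mk i)) (max_lt (hb.lt_mk i) hc)).not_ge ?_
  calc #M = #(⋃ j, B ∩ idx ⁻¹' {j} : Set M) := by
        rw [← hB]; congr; ext; simp
    _ ≤ #K * ⨆ j, #(B ∩ idx ⁻¹' {j} : Set M) := mk_iUnion_le _
    _ ≤ #K * max (ν i) c := by gcongr; exact ciSup_le' hbound

theorem lt_of_dominated (hb : IsBlockPartition idx ν) {g : M → K} {v w : K → K}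
    (hv : ∀ i, ν i ≤ #{α | idx α = i ∧ g α = v i}) {i₀ i : K}
    (hi₀ : #{α | g α ≤ w (idx α)} < ν i₀) (hi : i₀ ≤ i) : w i < v i := by
  by_contra! hwv
  have hsub : {α | idx α = i ∧ g α = v i} ⊆ {α | g α ≤ w (idx α)} := by
    rintro α ⟨rfl, hα⟩
    exact hα.trans_le hwv
  exact ((hb.monotone hi).trans ((hv i).trans (mk_le_mk_of_subset hsub))).not_gt hi₀

theorem mk_inter_preimage_eq (hb : IsBlockPartition idx ν) {B : Set M} {w : K → K}
    (hw : ∀ i, ν i ≤ #(B ∩ idx ⁻¹' {w i} : Set M)) {S : Set K} (hS : ∀ i₀, ∃ x ≥ i₀, w x ∈ S) :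
    #(B ∩ idx ⁻¹' S : Set M) = #M := by
  refine (mk_set_le _).antisymm (le_of_forall_lt fun c hc => ?_)
  obtain ⟨i, hi⟩ := hb.exists_lt c hc
  obtain ⟨x, hix, hxS⟩ := hS i
  calc c < ν i := hi
    _ ≤ ν x := hb.monotone hix
    _ ≤ #(B ∩ idx ⁻¹' {w x} : Set M) := hw x
    _ ≤ #(B ∩ idx ⁻¹' S : Set M) :=
        mk_le_mk_of_subset (inter_subset_inter_right _ (preimage_mono (singleton_subset_iff.2 hxS)))

theorem exists_splitting_map [WellFoundedLT K] (hb : IsBlockPartition idx ν)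
    (hK : ∀ ξ : K, #(Iio ξ) < Order.cof K) :
    ∃ A : (M → K) → Set M, ∀ B : Set M, #B = #M → ∃ f : M → K, ∀ g : M → K,
      #{α | g α ≤ f α} < #M → #(B ∩ A g : Set M) = #M ∧ #(B \ A g : Set M) = #M := by
  choose v hv using hb.exists_le_mk_fiber_inter
  choose R hR using fun g => exists_alternating_windows hK (v g)
  refine ⟨fun g => idx ⁻¹' R g, fun B hB => ?_⟩
  choose w hw_ge hw using fun i => hb.exists_ge_le_mk_inter_fiber hB (hb.lt_mk i) i
  refine ⟨w ∘ idx, fun g hg => ?_⟩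
  obtain ⟨i₀, hi₀⟩ := hb.exists_lt _ hg
  have hS {S : Set K} (hwin : ∀ j, ∃ x ≥ j, Ico x (v g x) ⊆ S) (j : K) : ∃ x ≥ j, w x ∈ S := by
    obtain ⟨x, hx, hxS⟩ := hwin (max i₀ j)
    exact ⟨x, le_of_max_le_right hx,
      hxS ⟨hw_ge x, hb.lt_of_dominated (hv g) hi₀ (le_of_max_le_left hx)⟩⟩
  rw [sdiff_eq, ← preimage_compl]
  exact ⟨hb.mk_inter_preimage_eq hw (hS fun j => (hR g j).1),
    hb.mk_inter_preimage_eq hw (hS fun j => (hR g j).2)⟩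

end IsBlockPartition

theorem mk_Iio_lt_cof_toType {κ : Cardinal.{u}} (hκ : κ.IsRegular) (ξ : κ.ord.ToType) :
    #(Iio ξ) < Order.cof κ.ord.ToType := by
  rw [Ordinal.cof_toType, hκ.cof_ord]
  simpa using mk_Iio_lt ξ

theorem exists_monotone_isRegular_cofinal {μ : Cardinal.{u}} (hμ : μ.IsSingular) :
    ∃ ν : μ.ord.cof.ord.ToType → Cardinal.{u}, Monotone ν ∧ (∀ i, (ν i).IsRegular) ∧
      (∀ i, μ.ord.cof < ν i) ∧ (∀ i, ν i < μ) ∧ ∀ c < μ, ∃ i, c < ν i := by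
  obtain ⟨f, hf⟩ := Ordinal.exists_isFundamentalSeq (o := μ.ord) rfl
  have hcof : ℵ₀ ≤ μ.ord.cof := (isRegular_cof (isSuccLimit_ord hμ.aleph0_le)).aleph0_le
  refine ⟨fun i => succ (max (f (Ordinal.ToType.mk.symm i)).1.card μ.ord.cof), fun i j hij => ?_,
    fun i => isRegular_succ (le_max_of_le_right hcof),
    fun i => lt_succ_of_le (le_max_right _ _),
    fun i => hμ.isSuccLimit.succ_lt (max_lt (lt_ord.1 (f _).2) hμ.cof_ord_lt), fun c hc => ?_⟩
  · exact succ_le_succ (max_le_max_right _ (Ordinal.card_le_card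
      (hf.strictMono.monotone (Ordinal.ToType.mk.symm.monotone hij))))
  · obtain ⟨_, ⟨j, rfl⟩, hj⟩ := hf.isCofinal_range ⟨c.ord, ord_lt_ord.2 hc⟩
    refine ⟨Ordinal.ToType.mk j, lt_succ_of_le (le_max_of_le_left ?_)⟩
    rw [OrderIso.symm_apply_apply]
    exact ord_le.1 hj

theorem exists_mk_preimage_singleton_eq {M K : Type u} (ν : K → Cardinal.{u})
    (h : sum ν = #M) : ∃ idx : M → K, ∀ i, #(idx ⁻¹' {i}) = ν i := by
  obtain ⟨e⟩ := Cardinal.eq.1 (h.symm.trans (by simp) : #M = #(Σ i, (ν i).out))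
  refine ⟨fun α => (e α).1, fun i => ?_⟩
  rw [show (fun α => (e α).1) ⁻¹' {i} = e ⁻¹' (Sigma.fst ⁻¹' {i}) from rfl, mk_preimage_equiv,
    ← range_sigmaMk, mk_range_eq _ sigma_mk_injective, mk_out]

theorem exists_isBlockPartition {μ : Cardinal.{u}} (hμ : μ.IsSingular) :
    ∃ (idx : μ.ord.ToType → μ.ord.cof.ord.ToType) (ν : μ.ord.cof.ord.ToType → Cardinal.{u}),
      IsBlockPartition idx ν := by
  obtain ⟨ν, hmono, hreg, hgt, hlt, hν_cof⟩ := exists_monotone_isRegular_cofinal hμ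
  have hK : #μ.ord.cof.ord.ToType = μ.ord.cof := mk_ord_toType _
  have hcof : ℵ₀ ≤ μ.ord.cof := (isRegular_cof (isSuccLimit_ord hμ.aleph0_le)).aleph0_le
  have : Nonempty μ.ord.cof.ord.ToType :=
    mk_ne_zero_iff.1 (by rw [hK]; exact (aleph0_pos.trans_le hcof).ne')
  have hsum : sum ν = #μ.ord.ToType := by
    rw [sum_eq_iSup_of_mk_le_iSup, mk_ord_toType]
    · exact ciSup_eq_of_forall_le_of_forall_lt_exists_gt (fun i => (hlt i).le) hν_cof
    · rwa [hK]
    · rw [hK]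
      exact le_ciSup_of_le bddAbove_of_small (Classical.arbitrary _) (hgt _).le
  obtain ⟨idx, hidx⟩ := exists_mk_preimage_singleton_eq ν hsum
  exact ⟨idx, ν, hidx, hreg, by simpa [hK] using hgt, by simpa using hlt, hmono,
    by simpa using hν_cof⟩

theorem isDominatingFamily_univ {μ κ : Cardinal.{u}} [NoMaxOrder κ.ord.ToType] (hμ : μ ≠ 0) :
    IsDominatingFamily μ κ univ := by
  choose s hs using fun v : κ.ord.ToType => exists_gt v
  refine fun f => ⟨s ∘ f, trivial, ?_⟩
  have hempty : {α | (s ∘ f) α ≤ f α} = ∅ := eq_empty_of_forall_notMem fun α => (hs (f α)).not_ge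
  rw [hempty, mk_eq_zero]
  exact pos_iff_ne_zero.2 hμ

theorem splitNumber_le_domNumber_of_exists_splitting_map {μ κ : Cardinal.{u}}
    [NoMaxOrder κ.ord.ToType] (hμ : μ ≠ 0)
    (A : (μ.ord.ToType → κ.ord.ToType) → Set μ.ord.ToType)
    (hA : ∀ B : Set μ.ord.ToType, #B = μ → ∃ f : μ.ord.ToType → κ.ord.ToType, ∀ g,
      #{α | g α ≤ f α} < μ →
        #(B ∩ A g : Set μ.ord.ToType) = μ ∧ #(B \ A g : Set μ.ord.ToType) = μ) :
    splitNumber μ ≤ domNumber μ κ := by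
  obtain ⟨D, hD, hDμ⟩ := csInf_mem (s := {c | ∃ D, IsDominatingFamily μ κ D ∧ #D = c})
    ⟨_, univ, isDominatingFamily_univ hμ, rfl⟩
  set D' := {g ∈ D | #(A g) = μ}
  have hsplit : IsSplittingFamily μ (A '' D') := by
    refine ⟨by rintro _ ⟨g, hg, rfl⟩; exact hg.2, fun B hB => ?_⟩
    obtain ⟨f, hf⟩ := hA B hB
    obtain ⟨g, hgD, hgf⟩ := hD f
    obtain ⟨h₁, h₂⟩ := hf g hgf
    have hAg : #(A g) = μ := ((mk_set_le _).trans_eq (mk_ord_toType μ)).antisymm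
      (h₁.ge.trans (mk_le_mk_of_subset inter_subset_right))
    exact ⟨A g, ⟨g, ⟨hgD, hAg⟩, rfl⟩, h₁, h₂⟩
  calc splitNumber μ ≤ #(A '' D') := csInf_le' ⟨_, hsplit, rfl⟩
    _ ≤ #D' := mk_image_le
    _ ≤ #D := mk_le_mk_of_subset (sep_subset _ _)
    _ = domNumber μ κ := hDμ

/-- Let `μ` be a singular cardinal of cofinality `κ`.
Then `𝔰_μ ≤ 𝔡_μ`. -/
theorem splitNumber_le_domNumber (μ κ : Cardinal.{u})
    (hμ : ℵ₀ ≤ μ) (hsing : μ.ord.cof < μ) (hκ : μ.ord.cof = κ) :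
    splitNumber μ ≤ domNumber μ κ := by
  subst hκ
  have hκ_reg : μ.ord.cof.IsRegular := isRegular_cof (isSuccLimit_ord hμ)
  have : NoMaxOrder μ.ord.cof.ord.ToType := Cardinal.noMaxOrder hκ_reg.aleph0_le
  obtain ⟨idx, ν, hb⟩ := exists_isBlockPartition ⟨hμ, hsing.ne⟩
  obtain ⟨A, hA⟩ := hb.exists_splitting_map (mk_Iio_lt_cof_toType hκ_reg)
  rw [mk_ord_toType] at hA
  exact splitNumber_le_domNumber_of_exists_splitting_map (aleph0_pos.trans_le hμ).ne' A hA
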